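/- arXiv:2306.17470 — 2 statements merged into one kernel-verified Lean document; each statement's English description precedes it below -/
import Mathlib

section
/- One-step descent inequality with noise bound: Under the setting of the composite mirror descent step (X ⊆ ℝⁿ convex, F convex differentiable, H(x) = μ‖x−x₁‖², D^H(a,b) = μ‖a−b‖², X_{t+1} = argmin_{x∈X}{α_t(⟨g_t,x⟩+H(x)) + γ_t D^H(x,X_t)}, Δ_t = g_t − ∇F(X_t)), for every x ∈ X: α_t(Ψ(X_t) − Ψ(x)) + α_t D^H(x, X_{t+1}) + α_t(H(X_{t+1}) − H(X_t)) ≤ γ_t(D^H(x,X_t) − D^H(x,X_{t+1})) + α_t⟨Δ_t, x − X_t⟩ + α_t²‖g_t‖²/(μγ_t). -/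
open RealInnerProductSpace Filter Topology

/-!
The prox objective `φ x = αₜ(⟪gₜ, x⟫ + H x) + γₜ D^H(x, Xₜ)` is `2(αₜ + γₜ)μ`-strongly
convex, so its minimiser `Xₜ₊₁` over `X` satisfies the three-point inequality
`φ Xₜ₊₁ + (αₜ + γₜ)μ‖x - Xₜ₊₁‖² ≤ φ x`. Add `αₜ` times the gradient inequality
`F Xₜ + ⟪∇F Xₜ, x - Xₜ⟫ ≤ F x` and the Young bound
`αₜ⟪gₜ, Xₜ - Xₜ₊₁⟫ ≤ γₜμ‖Xₜ - Xₜ₊₁‖² + αₜ²‖gₜ‖²/(4μγₜ)`.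
-/

section FirstOrder

variable {E : Type*} [NormedAddCommGroup E] [NormedSpace ℝ E] {s : Set E} {f : E → ℝ}
  {a b : E}

theorem ConvexOn.add_fderiv_sub_le {f' : E →L[ℝ] ℝ} (hf : ConvexOn ℝ s f) (ha : a ∈ s)
    (hb : b ∈ s) (hd : HasFDerivAt f f' a) : f a + f' (b - a) ≤ f b := by
  have hline : HasDerivAt (f ∘ AffineMap.lineMap (k := ℝ) a b) (f' (b - a)) 0 :=
    (AffineMap.lineMap_apply_zero (k := ℝ) a b ▸ hd).comp_hasDerivAt 0
      AffineMap.hasDerivAt_lineMap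
  have := (hf.comp_affineMap (AffineMap.lineMap a b)).le_slope_of_hasDerivAt
    (by simpa using ha) (by simpa using hb) one_pos hline
  rw [slope_def_field] at this
  simp only [Function.comp_apply, AffineMap.lineMap_apply_zero, AffineMap.lineMap_apply_one,
    sub_zero, div_one] at this
  linarith

end FirstOrder

theorem ConvexOn.add_inner_sub_le_of_hasGradientAt {E : Type*} [NormedAddCommGroup E]
    [InnerProductSpace ℝ E] [CompleteSpace E] {s : Set E} {f : E → ℝ} {g a b : E}
    (hf : ConvexOn ℝ s f) (ha : a ∈ s) (hb : b ∈ s) (hg : HasGradientAt f g a) :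
    f a + ⟪g, b - a⟫ ≤ f b :=
  hf.add_fderiv_sub_le ha hb hg.hasFDerivAt

section StrongConvexity

variable {E : Type*} [NormedAddCommGroup E] [NormedSpace ℝ E] {s : Set E} {f g : E → ℝ}
  {m n : ℝ}

theorem StrongConvexOn.add (hf : StrongConvexOn s m f) (hg : StrongConvexOn s n g) :
    StrongConvexOn s (m + n) (f + g) := by
  refine (UniformConvexOn.add hf hg).mono fun r ↦ le_of_eq ?_
  simp only [Pi.add_apply]
  ring

theorem StrongConvexOn.add_convexOn (hf : StrongConvexOn s m f) (hg : ConvexOn ℝ s g) :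
    StrongConvexOn s m (f + g) := by
  simpa [StrongConvexOn] using UniformConvexOn.add hf (uniformConvexOn_zero.mpr hg)

theorem StrongConvexOn.add_half_mul_sq_norm_sub_le_of_isMinOn {x y : E}
    (hf : StrongConvexOn s m f) (hy : y ∈ s) (hmin : IsMinOn f s y) (hx : x ∈ s) :
    f y + m / 2 * ‖x - y‖ ^ 2 ≤ f x := by
  have hseg : ∀ t ∈ Set.Ioc (0 : ℝ) 1, f y + (1 - t) * (m / 2 * ‖x - y‖ ^ 2) ≤ f x := by
    rintro t ⟨ht0, ht1⟩
    have hmem : t • x + (1 - t) • y ∈ s :=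
      hf.1 hx hy ht0.le (sub_nonneg.2 ht1) (add_sub_cancel t 1)
    have hconv := hf.2 hx hy ht0.le (sub_nonneg.2 ht1) (add_sub_cancel t 1)
    have hle : f y ≤ f (t • x + (1 - t) • y) := hmin hmem
    simp only [smul_eq_mul] at hconv
    have : t * (f y + (1 - t) * (m / 2 * ‖x - y‖ ^ 2)) ≤ t * f x := by linarith
    exact le_of_mul_le_mul_left this ht0
  have hlim : Tendsto (fun t : ℝ => f y + (1 - t) * (m / 2 * ‖x - y‖ ^ 2)) (𝓝[>] 0)
      (𝓝 (f y + (1 - 0) * (m / 2 * ‖x - y‖ ^ 2))) :=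
    (Continuous.tendsto (by fun_prop) 0).mono_left nhdsWithin_le_nhds
  simpa using le_of_tendsto hlim (Filter.eventually_of_mem (Ioc_mem_nhdsGT one_pos) hseg)

end StrongConvexity

section InnerProductSpace

variable {E : Type*} [NormedAddCommGroup E] [InnerProductSpace ℝ E] {s : Set E}

theorem strongConvexOn_mul_sq_norm_sub (hs : Convex ℝ s) (c : ℝ) (p : E) :
    StrongConvexOn s (2 * c) fun x ↦ c * ‖x - p‖ ^ 2 := by
  rw [strongConvexOn_iff_convex]
  have hlin : ConvexOn ℝ s (⇑((-(2 * c)) • innerₗ E p) + fun _ ↦ c * ‖p‖ ^ 2) :=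
    (LinearMap.convexOn _ hs).add (convexOn_const _ hs)
  convert hlin using 2 with x
  simp only [Pi.add_apply, LinearMap.smul_apply, innerₗ_apply_apply, smul_eq_mul,
    norm_sub_sq_real, real_inner_comm x p]
  ring

theorem real_inner_le_mul_sq_norm_add_sq_norm_div {c : ℝ} (hc : 0 < c) (u v : E) :
    ⟪u, v⟫ ≤ c * ‖v‖ ^ 2 + ‖u‖ ^ 2 / (4 * c) := by
  have hamgm : ‖u‖ * ‖v‖ ≤ c * ‖v‖ ^ 2 + ‖u‖ ^ 2 / (4 * c) := by
    rw [← sub_nonneg]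
    have : c * ‖v‖ ^ 2 + ‖u‖ ^ 2 / (4 * c) - ‖u‖ * ‖v‖ = (2 * c * ‖v‖ - ‖u‖) ^ 2 / (4 * c) := by
      field_simp
      ring
    rw [this]
    positivity
  exact (real_inner_le_norm u v).trans hamgm

def proxObjective (α γ μ : ℝ) (g p q x : E) : ℝ :=
  α * (⟪g, x⟫ + μ * ‖x - p‖ ^ 2) + γ * (μ * ‖x - q‖ ^ 2)

theorem strongConvexOn_proxObjective (hs : Convex ℝ s) (α γ μ : ℝ) (g p q : E) :
    StrongConvexOn s (2 * (α * μ) + 2 * (γ * μ)) (proxObjective α γ μ g p q) := by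
  convert ((strongConvexOn_mul_sq_norm_sub hs (α * μ) p).add
    (strongConvexOn_mul_sq_norm_sub hs (γ * μ) q)).add_convexOn
    ((α • innerₗ E g).convexOn hs) using 1
  funext x
  simp only [proxObjective, Pi.add_apply, LinearMap.smul_apply, innerₗ_apply_apply, smul_eq_mul]
  ring

end InnerProductSpace

theorem stmt9_general {n : ℕ}
    (X : Set (EuclideanSpace ℝ (Fin n))) (hXconv : Convex ℝ X)
    (F : EuclideanSpace ℝ (Fin n) → ℝ) (hFconv : ConvexOn ℝ Set.univ F)
    (gF : EuclideanSpace ℝ (Fin n) → EuclideanSpace ℝ (Fin n))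
    (hgF : ∀ x, HasGradientAt F (gF x) x)
    (μ : ℝ) (hμ : 0 < μ) (x₁ : EuclideanSpace ℝ (Fin n))
    (H Ψ : EuclideanSpace ℝ (Fin n) → ℝ)
    (hH : ∀ x, H x = μ * ‖x - x₁‖ ^ 2) (hΨ : ∀ x, Ψ x = F x + H x)
    (DH : EuclideanSpace ℝ (Fin n) → EuclideanSpace ℝ (Fin n) → ℝ)
    (hDH : ∀ a b, DH a b = μ * ‖a - b‖ ^ 2)
    (Xt Xnext gt : EuclideanSpace ℝ (Fin n)) (hXnext : Xnext ∈ X)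
    (αt γt : ℝ) (hα : 0 < αt) (hγ : 0 < γt)
    (hprox : IsMinOn (fun x => αt * (⟪gt, x⟫ + H x) + γt * DH x Xt) X Xnext)
    (Δt : EuclideanSpace ℝ (Fin n)) (hΔ : Δt = gt - gF Xt) :
    ∀ x ∈ X,
      αt * (Ψ Xt - Ψ x) + αt * DH x Xnext + αt * (H Xnext - H Xt) ≤
        γt * (DH x Xt - DH x Xnext) + αt * ⟪Δt, x - Xt⟫ +
          αt ^ 2 * ‖gt‖ ^ 2 / (μ * γt) := by
  intro x hx
  obtain rfl : H = fun x ↦ μ * ‖x - x₁‖ ^ 2 := funext hH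
  obtain rfl : DH = fun a b ↦ μ * ‖a - b‖ ^ 2 := funext₂ hDH
  subst hΔ
  have hthree := (strongConvexOn_proxObjective hXconv αt γt μ gt x₁ Xt)
    |>.add_half_mul_sq_norm_sub_le_of_isMinOn hXnext hprox hx
  have hgrad : F Xt + ⟪gF Xt, x - Xt⟫ ≤ F x :=
    hFconv.add_inner_sub_le_of_hasGradientAt trivial trivial (hgF Xt)
  have hyoung := real_inner_le_mul_sq_norm_add_sq_norm_div (mul_pos hγ hμ) (αt • gt) (Xt - Xnext)
  have hyoung_const : ‖αt • gt‖ ^ 2 / (4 * (γt * μ)) ≤ αt ^ 2 * ‖gt‖ ^ 2 / (μ * γt) := by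
    rw [norm_smul, Real.norm_of_nonneg hα.le, mul_pow, mul_comm γt μ]
    exact div_le_div_of_nonneg_left (by positivity) (by positivity) (by linarith [mul_pos hμ hγ])
  simp only [proxObjective, hΨ, real_inner_smul_left, inner_sub_left, inner_sub_right,
    norm_sub_rev Xt Xnext] at hthree hgrad hyoung ⊢
  linarith [mul_le_mul_of_nonneg_left hgrad hα.le]

theorem stmt9 {n : ℕ}
    (X : Set (EuclideanSpace ℝ (Fin n))) (hXconv : Convex ℝ X)
    (F : EuclideanSpace ℝ (Fin n) → ℝ) (hFconv : ConvexOn ℝ Set.univ F)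
    (gF : EuclideanSpace ℝ (Fin n) → EuclideanSpace ℝ (Fin n))
    (hgF : ∀ x, HasGradientAt F (gF x) x)
    (μ : ℝ) (hμ : 0 < μ) (x₁ : EuclideanSpace ℝ (Fin n)) (hx₁ : x₁ ∈ X)
    (H Ψ : EuclideanSpace ℝ (Fin n) → ℝ)
    (hH : ∀ x, H x = μ * ‖x - x₁‖ ^ 2) (hΨ : ∀ x, Ψ x = F x + H x)
    (DH : EuclideanSpace ℝ (Fin n) → EuclideanSpace ℝ (Fin n) → ℝ)
    (hDH : ∀ a b, DH a b = μ * ‖a - b‖ ^ 2)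
    (Xt Xnext gt : EuclideanSpace ℝ (Fin n)) (hXt : Xt ∈ X) (hXnext : Xnext ∈ X)
    (αt γt : ℝ) (hα : 0 < αt) (hγ : 0 < γt)
    (hprox : IsMinOn (fun x => αt * (⟪gt, x⟫ + H x) + γt * DH x Xt) X Xnext)
    (Δt : EuclideanSpace ℝ (Fin n)) (hΔ : Δt = gt - gF Xt) :
    ∀ x ∈ X,
      αt * (Ψ Xt - Ψ x) + αt * DH x Xnext + αt * (H Xnext - H Xt) ≤
        γt * (DH x Xt - DH x Xnext) + αt * ⟪Δt, x - Xt⟫ +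
          αt ^ 2 * ‖gt‖ ^ 2 / (μ * γt) :=
  stmt9_general X hXconv F hFconv gF hgF μ hμ x₁ H Ψ hH hΨ DH hDH Xt Xnext gt hXnext αt γt hα hγ
    hprox Δt hΔ
end

section
/- Smoothness upper bound for the aggregated iterate (key step in accelerated analysis): Let F : ℝⁿ → ℝ be convex and L-smooth, H convex, Ψ = F + H. Given X_t^{ag}, X_t^{md}, X_{t+1} ∈ ℝⁿ, weights A_{t−1} ≥ 0, α_t > 0, A_t = A_{t−1} + α_t, suppose X_t^{md} = (A_{t−1}/A_t) X_t^{ag} + (α_t/A_t) X_t and X_{t+1}^{ag} = (A_{t−1}/A_t) X_t^{ag} + (α_t/A_t) X_{t+1}. Then Ψ(X_{t+1}^{ag}) ≤ (A_{t−1}/A_t) Ψ(X_t^{ag}) + (α_t/A_t) l_Ψ(X_{t+1}, X_t^{md}) + (L/2)(α_t²/A_t²)‖X_{t+1} − X_t‖², where l_Ψ(x, y) = F(y) + ⟨∇F(y), x − y⟩ + H(x). -/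
open RealInnerProductSpace

section

variable {E : Type*} [NormedAddCommGroup E] [InnerProductSpace ℝ E]

/-- On the line through `y` and `x`, `F` is a convex function of one variable, whose secant
slopes dominate its derivative. -/
theorem ConvexOn.add_fderiv_sub_le_s16 {s : Set E} {F : E → ℝ} {F' : E →L[ℝ] ℝ} {x y : E}
    (hF : ConvexOn ℝ s F) (hx : x ∈ s) (hy : y ∈ s) (hF' : HasFDerivAt F F' y) :
    F y + F' (x - y) ≤ F x := by
  let line : ℝ →ᵃ[ℝ] E := AffineMap.lineMap y x
  have hconv : ConvexOn ℝ (line ⁻¹' s) (F ∘ line) := hF.comp_affineMap line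
  have hderiv : HasDerivAt (F ∘ line) (F' (x - y)) 0 := by
    have hline : HasDerivAt line (x - y) 0 := AffineMap.hasDerivAt_lineMap
    rw [← AffineMap.lineMap_apply_zero y x (k := ℝ)] at hF'
    exact hF'.comp_hasDerivAt 0 hline
  have hslope := hconv.le_slope_of_hasDerivWithinAt_Ioi (x := 0) (y := 1)
    (by simpa [line] using hy) (by simpa [line] using hx) one_pos hderiv.hasDerivWithinAt
  simp only [slope_def_field, Function.comp_apply, line, AffineMap.lineMap_apply_zero,
    AffineMap.lineMap_apply_one, sub_zero, div_one] at hslope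
  linarith

variable [CompleteSpace E]

theorem ConvexOn.add_inner_gradient_sub_le {s : Set E} {F : E → ℝ} {g x y : E}
    (hF : ConvexOn ℝ s F) (hx : x ∈ s) (hy : y ∈ s) (hg : HasGradientAt F g y) :
    F y + ⟪g, x - y⟫ ≤ F x := by
  simpa using hF.add_fderiv_sub_le_s16 hx hy hg.hasFDerivAt

/-- The linear term of the smoothness bound splits along `a • u + b • v`: its `u`-part is
absorbed by the gradient inequality at `u`, its `v`-part is kept as the linearization at `v`. -/
theorem ConvexOn.add_le_of_smooth_bound {F H : E → ℝ} {g u v y : E} {a b L : ℝ}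
    (hF : ConvexOn ℝ Set.univ F) (hg : HasGradientAt F g y) (hH : ConvexOn ℝ Set.univ H)
    (ha : 0 ≤ a) (hb : 0 ≤ b) (hab : a + b = 1)
    (hsmooth : F (a • u + b • v) - F y - ⟪g, a • u + b • v - y⟫ ≤
      L / 2 * ‖a • u + b • v - y‖ ^ 2) :
    F (a • u + b • v) + H (a • u + b • v) ≤
      a * (F u + H u) + b * (F y + ⟪g, v - y⟫ + H v) + L / 2 * ‖a • u + b • v - y‖ ^ 2 := by
  have hgrad : F y + ⟪g, u - y⟫ ≤ F u := hF.add_inner_gradient_sub_le trivial trivial hg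
  have hHz : H (a • u + b • v) ≤ a * H u + b * H v := hH.2 trivial trivial ha hb hab
  have hsplit : ⟪g, a • u + b • v - y⟫ = a * ⟪g, u - y⟫ + b * ⟪g, v - y⟫ := by
    have hdecomp : a • u + b • v - y = a • (u - y) + b • (v - y) := by
      calc a • u + b • v - y = a • u + b • v - (a + b) • y := by rw [hab, one_smul]
        _ = a • (u - y) + b • (v - y) := by module
    rw [hdecomp, inner_add_right, real_inner_smul_right, real_inner_smul_right]
  have hFy : F y = a * F y + b * F y := by rw [← add_mul, hab, one_mul]
  linarith [mul_le_mul_of_nonneg_left hgrad ha]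

end

theorem stmt16_general {n : ℕ}
    (F H Ψ : EuclideanSpace ℝ (Fin n) → ℝ)
    (gF : EuclideanSpace ℝ (Fin n) → EuclideanSpace ℝ (Fin n))
    (hgF : ∀ x, HasGradientAt F (gF x) x)
    (hFconv : ConvexOn ℝ Set.univ F)
    (L : ℝ)
    (hsmooth : ∀ x y, F x - F y - ⟪gF y, x - y⟫ ≤ L / 2 * ‖x - y‖ ^ 2)
    (hHconv : ConvexOn ℝ Set.univ H)
    (hΨ : ∀ x, Ψ x = F x + H x)
    (lΨ : EuclideanSpace ℝ (Fin n) → EuclideanSpace ℝ (Fin n) → ℝ)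
    (hlΨ : ∀ x y, lΨ x y = F y + ⟪gF y, x - y⟫ + H x)
    (Xag Xagnext Xmd Xt Xnext : EuclideanSpace ℝ (Fin n))
    (Aprev αt At : ℝ) (hAprev : 0 ≤ Aprev) (hαt : 0 < αt) (hAt : At = Aprev + αt)
    (hmd : Xmd = (Aprev / At) • Xag + (αt / At) • Xt)
    (hag : Xagnext = (Aprev / At) • Xag + (αt / At) • Xnext) :
    Ψ Xagnext ≤
      Aprev / At * Ψ Xag + αt / At * lΨ Xnext Xmd +
        L / 2 * (αt ^ 2 / At ^ 2) * ‖Xnext - Xt‖ ^ 2 := by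
  have hAt_pos : 0 < At := by linarith
  have hweights : Aprev / At + αt / At = 1 := by rw [← add_div, ← hAt, div_self hAt_pos.ne']
  have hstep : Xagnext - Xmd = (αt / At) • (Xnext - Xt) := by rw [hag, hmd]; module
  have hnorm : ‖Xagnext - Xmd‖ ^ 2 = αt ^ 2 / At ^ 2 * ‖Xnext - Xt‖ ^ 2 := by
    rw [hstep, norm_smul, mul_pow, Real.norm_eq_abs, sq_abs, div_pow]
  have hbound := hFconv.add_le_of_smooth_bound (u := Xag) (v := Xnext) (hgF Xmd) hHconv
    (div_nonneg hAprev hAt_pos.le) (div_nonneg hαt.le hAt_pos.le) hweights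
    (hag ▸ hsmooth Xagnext Xmd)
  rw [← hag, hnorm] at hbound
  rw [hΨ, hΨ, hlΨ, mul_assoc]
  exact hbound

theorem stmt16 {n : ℕ}
    (F H Ψ : EuclideanSpace ℝ (Fin n) → ℝ)
    (gF : EuclideanSpace ℝ (Fin n) → EuclideanSpace ℝ (Fin n))
    (hgF : ∀ x, HasGradientAt F (gF x) x)
    (hFconv : ConvexOn ℝ Set.univ F)
    (L : ℝ) (hL : 0 ≤ L)
    (hsmooth : ∀ x y, F x - F y - ⟪gF y, x - y⟫ ≤ L / 2 * ‖x - y‖ ^ 2)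
    (hHconv : ConvexOn ℝ Set.univ H)
    (hΨ : ∀ x, Ψ x = F x + H x)
    (lΨ : EuclideanSpace ℝ (Fin n) → EuclideanSpace ℝ (Fin n) → ℝ)
    (hlΨ : ∀ x y, lΨ x y = F y + ⟪gF y, x - y⟫ + H x)
    (Xag Xagnext Xmd Xt Xnext : EuclideanSpace ℝ (Fin n))
    (Aprev αt At : ℝ) (hAprev : 0 ≤ Aprev) (hαt : 0 < αt) (hAt : At = Aprev + αt)
    (hmd : Xmd = (Aprev / At) • Xag + (αt / At) • Xt)
    (hag : Xagnext = (Aprev / At) • Xag + (αt / At) • Xnext) :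
    Ψ Xagnext ≤
      Aprev / At * Ψ Xag + αt / At * lΨ Xnext Xmd +
        L / 2 * (αt ^ 2 / At ^ 2) * ‖Xnext - Xt‖ ^ 2 :=
  stmt16_general F H Ψ gF hgF hFconv L hsmooth hHconv hΨ lΨ hlΨ Xag Xagnext Xmd Xt Xnext Aprev αt At
    hAprev hαt hAt hmd hag
end
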